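/- Let n ≥ 1, μ ∈ ℝ, θ > 0 and σ > 0. Then the minimum of E_iid over A_n is attained, and min_{T ∈ A_n} E_iid(T) = (σ²/2)·( (n − 1)·θ²/(θ² + σ²) + (nμ² + θ²)/(nμ² + θ² + σ²) ). -/

import Mathlib

open Matrix

/-- The risk for the random i.i.d. vectors model:
`E_iid(T) = (μ²/2)‖(T − I)𝟙‖₂² + (θ²/2)‖T − I‖_F² + (σ²/2)‖T‖_F²`. -/
noncomputable def Eiid (n : ℕ) (μ θ σ : ℝ) (T : Matrix (Fin n) (Fin n) ℝ) : ℝ :=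
  μ ^ 2 / 2 * (∑ i, ((T - 1).mulVec (fun _ : Fin n => 1) i) ^ 2)
    + θ ^ 2 / 2 * (∑ i, ∑ j, ((T - 1) i j) ^ 2)
    + σ ^ 2 / 2 * ∑ i, ∑ j, (T i j) ^ 2

/-- The set of bilevel estimators `A_k = { (I + RᵀR)⁻¹ : R ∈ ℝ^{k×n} }`. -/
def bilevelSet (k n : ℕ) : Set (Matrix (Fin n) (Fin n) ℝ) :=
  {T | ∃ R : Matrix (Fin k) (Fin n) ℝ, T = (1 + Rᵀ * R)⁻¹}

/-- Auxiliary: sum of squares of a vector shifted by a single-coordinate spike. -/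
lemma sum_sq_sub_ite {n : ℕ} (v : Fin n → ℝ) (i : Fin n) (q : ℝ) :
    ∑ j, (v j - (if i = j then q else 0)) ^ 2
      = (∑ j, (v j) ^ 2) - 2 * q * v i + q ^ 2 := by
  have h : ∀ j ∈ Finset.univ, (v j - (if i = j then q else 0)) ^ 2
      = (v j) ^ 2 + (if i = j then q ^ 2 - 2 * q * v j else 0) := by
    intro j _; split_ifs with h
    · subst h; ring
    · ring
  rw [Finset.sum_congr rfl h, Finset.sum_add_distrib, Finset.sum_ite_eq]
  simp; ring

/-- Auxiliary: sum of squares of a constant vector plus a single-coordinate spike. -/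
lemma sum_sq_add_ite {n : ℕ} (i : Fin n) (p q : ℝ) :
    ∑ j : Fin n, (p + (if i = j then q else 0)) ^ 2
      = (n : ℝ) * p ^ 2 + 2 * p * q + q ^ 2 := by
  have h : ∀ j ∈ Finset.univ, (p + (if (i:Fin n) = j then q else 0)) ^ 2
      = p ^ 2 + (if i = j then 2*p*q + q ^ 2 else 0) := by
    intro j _; split_ifs with h <;> ring
  rw [Finset.sum_congr rfl h, Finset.sum_add_distrib, Finset.sum_ite_eq]
  simp [mul_comm]; ring

/-- Auxiliary scalar identity: the value of the risk at the optimal bilevel matrix. -/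
lemma val_identity (N mu th sg a b p : ℝ) (hN : N ≠ 0) (h1 : th^2 + sg^2 ≠ 0)
    (h2 : N*mu^2 + th^2 + sg^2 ≠ 0)
    (ha : a = (N * mu ^ 2 + th ^ 2) / (N * mu ^ 2 + th ^ 2 + sg ^ 2))
    (hb : b = th ^ 2 / (th ^ 2 + sg ^ 2)) (hp : p = (a - b) / N) :
    mu ^ 2 / 2 * (N * (N*p + (b-1))^2) + th ^ 2 / 2 * (N * (N*p^2 + 2*p*(b-1) + (b-1)^2))
      + sg ^ 2 / 2 * (N * (N*p^2 + 2*p*b + b^2)) = sg ^ 2 / 2 * ((N - 1) * b + a) := by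
  subst hp ha hb
  have h2' : mu ^ 2 * N + th ^ 2 + sg ^ 2 ≠ 0 := by rw [mul_comm]; exact h2
  field_simp
  ring

/-- Auxiliary scalar identity: completing the square for one row of the risk. -/
lemma key_identity (N mu th sg a b p : ℝ) (hN : N ≠ 0) (h1 : th^2 + sg^2 ≠ 0)
    (h2 : N*mu^2 + th^2 + sg^2 ≠ 0)
    (ha : a = (N * mu ^ 2 + th ^ 2) / (N * mu ^ 2 + th ^ 2 + sg ^ 2))
    (hb : b = th ^ 2 / (th ^ 2 + sg ^ 2)) (hp : p = (a - b) / N) (S si x : ℝ) :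
    mu^2/2*(si-1)^2 + th^2/2*(S - 2*x + 1) + sg^2/2*S
      = sg ^ 2 / 2 * ((N - 1) * b + a) / N + mu^2/2*(si-a)^2
        + (th^2+sg^2)/2*((S - 2*p*si + N*p^2) - 2*b*(x-p) + b^2) := by
  subst hp ha hb
  have h2' : mu ^ 2 * N + th ^ 2 + sg ^ 2 ≠ 0 := by rw [mul_comm]; exact h2
  field_simp
  ring

/-- Best bilevel risk, random i.i.d. vectors, `k = n`: the minimum of
`E_iid` over `A_n` is attained and equals
`(σ²/2)((n−1)·θ²/(θ²+σ²) + (nμ²+θ²)/(nμ²+θ²+σ²))`. -/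
theorem best_bilevel_iid_k_eq_n (n : ℕ) (hn : 1 ≤ n)
    (μ : ℝ) (θ σ : ℝ) (hθ : 0 < θ) (hσ : 0 < σ) :
    IsLeast (Eiid n μ θ σ '' bilevelSet n n)
      (σ ^ 2 / 2 *
        (((n : ℝ) - 1) * (θ ^ 2 / (θ ^ 2 + σ ^ 2))
          + ((n : ℝ) * μ ^ 2 + θ ^ 2) / ((n : ℝ) * μ ^ 2 + θ ^ 2 + σ ^ 2))) := by
  have hN : (0:ℝ) < (n:ℝ) := by exact_mod_cast hn
  have hNne : ((n:ℝ)) ≠ 0 := ne_of_gt hN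
  have h1 : (0:ℝ) < θ^2 + σ^2 := by positivity
  have h2 : (0:ℝ) < (n:ℝ)*μ^2 + θ^2 + σ^2 := by positivity
  have h3 : (0:ℝ) < (n:ℝ)*μ^2 + θ^2 := by positivity
  set a : ℝ := ((n:ℝ) * μ ^ 2 + θ ^ 2) / ((n:ℝ) * μ ^ 2 + θ ^ 2 + σ ^ 2) with ha
  set b : ℝ := θ ^ 2 / (θ ^ 2 + σ ^ 2) with hb
  set p : ℝ := (a - b) / (n:ℝ) with hp
  set v : ℝ := σ ^ 2 / 2 * (((n : ℝ) - 1) * b + a) with hv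
  set J : Matrix (Fin n) (Fin n) ℝ := Matrix.of (fun _ _ => (1:ℝ)) with hJ
  set Tstar : Matrix (Fin n) (Fin n) ℝ := b • (1:Matrix (Fin n) (Fin n) ℝ) + p • J with hT
  have hJt : Jᵀ = J := by ext i j; simp [hJ]
  have hJJ : J * J = (n:ℝ) • J := by
    ext i j; simp [hJ, Matrix.mul_apply, Finset.sum_const]
  -- Membership: `Tstar = (1 + RᵀR)⁻¹` for an explicit `R`.
  obtain ⟨e, he2⟩ : ∃ e : ℝ, e^2 = σ^2/((n:ℝ)*μ^2+θ^2) :=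
    ⟨Real.sqrt _, Real.sq_sqrt (by positivity)⟩
  obtain ⟨f, hf2⟩ : ∃ f : ℝ, f^2 = σ^2/θ^2 :=
    ⟨Real.sqrt _, Real.sq_sqrt (by positivity)⟩
  set R : Matrix (Fin n) (Fin n) ℝ := f • (1:Matrix (Fin n) (Fin n) ℝ) + ((e-f)/(n:ℝ)) • J with hR
  have hRt : Rᵀ = R := by
    rw [hR, transpose_add, transpose_smul, transpose_smul, transpose_one, hJt]
  have hRR : Rᵀ * R = (σ^2/θ^2) • (1:Matrix (Fin n) (Fin n) ℝ)
      + ((σ^2/((n:ℝ)*μ^2+θ^2) - σ^2/θ^2)/(n:ℝ)) • J := by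
    rw [hRt, hR]
    simp only [add_mul, mul_add, smul_mul_assoc, mul_smul_comm, one_mul, mul_one, smul_smul, hJJ]
    match_scalars
    · linear_combination hf2
    · have he' : e ^ 2 * ((n:ℝ)*μ^2+θ^2) = σ^2 := by rw [he2]; field_simp
      have hf' : f ^ 2 * θ^2 = σ^2 := by rw [hf2]; field_simp
      field_simp
      linear_combination θ^2*he' - ((n:ℝ)*μ^2+θ^2)*hf'
  have hMT : (1 + Rᵀ * R) * Tstar = 1 := by
    rw [hRR, hT]
    simp only [add_mul, mul_add, smul_mul_assoc, mul_smul_comm, one_mul, mul_one, smul_smul, hJJ]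
    match_scalars
    · simp only [hb]; field_simp
    · simp only [hp, ha, hb]; field_simp; ring
  have hmem : Tstar ∈ bilevelSet n n := ⟨R, (Matrix.inv_eq_right_inv hMT).symm⟩
  -- Entries of `Tstar`.
  have hTentry : ∀ i j, Tstar i j = p + (if i = j then b else 0) := by
    intro i j; rw [hT]
    by_cases h : i = j <;> simp [h, hJ, Matrix.one_apply, add_comm]
  have hTs1 : ∀ i j, (Tstar - 1) i j = p + (if i = j then b - 1 else 0) := by
    intro i j
    rw [Matrix.sub_apply, hTentry, Matrix.one_apply]
    split_ifs <;> ring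
  have hmvs : ∀ i, (Tstar - 1).mulVec (fun _ : Fin n => 1) i = (n:ℝ)*p + (b-1) := by
    intro i
    simp [Matrix.mulVec, dotProduct, hTs1, Finset.sum_add_distrib, Finset.sum_ite_eq,
      Finset.sum_const, Finset.card_univ, nsmul_eq_mul]
  -- Value of the risk at `Tstar`.
  have hval : Eiid n μ θ σ Tstar = v := by
    rw [hv]
    have s1 : ∑ i, ((Tstar - 1).mulVec (fun _ : Fin n => 1) i) ^ 2
        = (n:ℝ) * ((n:ℝ)*p + (b-1))^2 := by
      simp [hmvs, Finset.sum_const, Finset.card_univ, nsmul_eq_mul]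
    have s2 : ∑ i, ∑ j, ((Tstar - 1) i j) ^ 2
        = (n:ℝ) * ((n:ℝ)*p^2 + 2*p*(b-1) + (b-1)^2) := by
      have h : ∀ i : Fin n, ∑ j, ((Tstar - 1) i j) ^ 2
          = (n:ℝ)*p^2 + 2*p*(b-1) + (b-1)^2 := by
        intro i
        simp only [hTs1]
        exact sum_sq_add_ite i p (b-1)
      rw [Finset.sum_congr rfl (fun i _ => h i), Finset.sum_const, Finset.card_univ,
        nsmul_eq_mul]
      simp
    have s3 : ∑ i, ∑ j, (Tstar i j) ^ 2
        = (n:ℝ) * ((n:ℝ)*p^2 + 2*p*b + b^2) := by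
      have h : ∀ i : Fin n, ∑ j, (Tstar i j) ^ 2 = (n:ℝ)*p^2 + 2*p*b + b^2 := by
        intro i
        simp only [hTentry]
        exact sum_sq_add_ite i p b
      rw [Finset.sum_congr rfl (fun i _ => h i), Finset.sum_const, Finset.card_univ,
        nsmul_eq_mul]
      simp
    rw [Eiid, s1, s2, s3]
    exact val_identity (n:ℝ) μ θ σ a b p hNne (ne_of_gt h1) (ne_of_gt h2) ha hb hp
  constructor
  · exact ⟨Tstar, hmem, hval⟩
  -- Lower bound: the value `v` is a lower bound of the risk over ALL matrices.
  rintro x ⟨T, -, rfl⟩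
  set s : Fin n → ℝ := fun i => ∑ j, T i j with hs
  have hT1 : ∀ i j, (T - 1) i j = T i j - (if i = j then 1 else 0) := by
    intro i j; rw [Matrix.sub_apply, Matrix.one_apply]
  have hmv : ∀ i, (T - 1).mulVec (fun _ : Fin n => 1) i = s i - 1 := by
    intro i
    simp [Matrix.mulVec, dotProduct, hT1, Finset.sum_sub_distrib, Finset.sum_ite_eq, hs]
  -- scalar identity (completion of squares)
  have key : ∀ S si x : ℝ,
      μ^2/2*(si-1)^2 + θ^2/2*(S - 2*x + 1) + σ^2/2*S
        = v/(n:ℝ) + μ^2/2*(si-a)^2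
          + (θ^2+σ^2)/2*((S - 2*p*si + (n:ℝ)*p^2) - 2*b*(x-p) + b^2) := by
    intro S si x
    rw [hv]
    exact key_identity (n:ℝ) μ θ σ a b p hNne (ne_of_gt h1) (ne_of_gt h2) ha hb hp S si x
  -- per-row bound
  have hrow : ∀ i : Fin n, v/(n:ℝ)
      ≤ μ^2/2*((s i)-1)^2 + θ^2/2*(∑ j, ((T - 1) i j)^2) + σ^2/2*(∑ j, (T i j)^2) := by
    intro i
    have e1 : ∑ j, ((T - 1) i j)^2 = (∑ j, (T i j)^2) - 2*(T i i) + 1 := by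
      have := sum_sq_sub_ite (fun j => T i j) i 1
      simp only [hT1]
      simpa using this
    have e2 : ∑ j, ((T i j - p))^2 = (∑ j, (T i j)^2) - 2*p*(s i) + (n:ℝ)*p^2 := by
      have h : ∀ j ∈ Finset.univ, (T i j - p)^2 = (T i j)^2 - 2*p*(T i j) + p^2 := by
        intro j _; ring
      rw [Finset.sum_congr rfl h, Finset.sum_add_distrib, Finset.sum_sub_distrib,
        Finset.sum_const, Finset.card_univ, ← Finset.mul_sum]
      simp [hs, nsmul_eq_mul]
    have e3 := sum_sq_sub_ite (fun j => T i j - p) i b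
    have pos : (0:ℝ) ≤ ∑ j, ((T i j - p) - (if i = j then b else 0))^2 :=
      Finset.sum_nonneg fun j _ => sq_nonneg _
    rw [e3, e2] at pos
    rw [e1, key (∑ j, (T i j)^2) (s i) (T i i)]
    have q1 : (0:ℝ) ≤ μ^2/2*((s i)-a)^2 := by positivity
    have q2 : (0:ℝ) ≤ (θ^2+σ^2)/2*(((∑ j, (T i j)^2) - 2*p*(s i) + (n:ℝ)*p^2)
        - 2*b*(T i i-p) + b^2) := by
      apply mul_nonneg (by positivity)
      linarith
    linarith
  -- assemble
  have hE : Eiid n μ θ σ T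
      = ∑ i, (μ^2/2*((s i)-1)^2 + θ^2/2*(∑ j, ((T - 1) i j)^2) + σ^2/2*(∑ j, (T i j)^2)) := by
    rw [Eiid]
    rw [Finset.sum_add_distrib, Finset.sum_add_distrib, Finset.mul_sum, Finset.mul_sum,
      Finset.mul_sum]
    congr 1
    · congr 1
      exact Finset.sum_congr rfl fun i _ => by rw [hmv]
  have hsum : v = ∑ _i : Fin n, v/(n:ℝ) := by
    rw [Finset.sum_const, Finset.card_univ]
    simp [nsmul_eq_mul]
    field_simp
  rw [hE, hsum]
  exact Finset.sum_le_sum fun i _ => hrow i
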